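/- Let G be an infinite group and I a proper translation invariant ideal on G. For every decomposition G = A₁ ∪ … ∪ Aₙ of G into n subsets, there exist an index i and a subset F of G with |F| ≤ 2^(2^(n-1) - 1) such that F·Δ_I(Aᵢ) = G. -/

import Mathlib

open Pointwise

/-- A family of subsets of `G` is an ideal if it is closed under taking subsets
and finite unions. -/
def IsSetIdeal {G : Type*} (I : Set (Set G)) : Prop :=
  (∀ s t : Set G, s ⊆ t → t ∈ I → s ∈ I) ∧ (∀ s ∈ I, ∀ t ∈ I, s ∪ t ∈ I)

/-- A family of subsets of `G` is translation invariant if it is closed under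
left translation. -/
def IsTransInv {G : Type*} [Group G] (I : Set (Set G)) : Prop :=
  ∀ s ∈ I, ∀ g : G, g • s ∈ I

/-- `A =_I B` iff the symmetric difference `A △ B` belongs to `I`. -/
def IdealEq {G : Type*} (I : Set (Set G)) (A B : Set G) : Prop :=
  symmDiff A B ∈ I

/-- `A` is `I`-large if `FA =_I G` for some finite `F ⊆ G`. -/
def ILarge {G : Type*} [Group G] (I : Set (Set G)) (A : Set G) : Prop :=
  ∃ F : Set G, F.Finite ∧ IdealEq I (F * A) Set.univ

/-- `A` is `I`-small if `(G \ A) ∩ L` is `I`-large for every `I`-large `L ⊆ G`. -/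
def ISmall {G : Type*} [Group G] (I : Set (Set G)) (A : Set G) : Prop :=
  ∀ L : Set G, ILarge I L → ILarge I ((Set.univ \ A) ∩ L)

/-- The combinatorial derivation relative to `I`:
`Δ_I(A) = {g ∈ G : gA ∩ A ∉ I}`. -/
def combDerivI {G : Type*} [Group G] (I : Set (Set G)) (A : Set G) : Set G :=
  {g : G | (g • A) ∩ A ∉ I}

/-
Carry finite sets `U i` of translates with `G \ ⋃ i, U i * A i ∈ I`, starting from `U i = {1}`,
and remove the pieces one at a time. For a piece `A = A j` with translates `U`, either
`U * Δ_I(A) = G`, and we are done, or, since `Δ_I(A)` is symmetric, some `g` has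
`A ∩ g U A ∈ I`. In that case a point `x ∈ u A` (`u ∈ U`) lies, up to `I`, outside `u g U A`, so
`(u g)⁻¹ x` is covered by some `U i * A i` with `i ≠ j`; hence `A j` can be dropped once every
`U i` is enlarged to `U i ∪ U g U i`. This turns a bound `c` on `|U i|` into `c + c² ≤ 2c²`,
and `n - 1` such steps give `2 ^ (2 ^ (n - 1) - 1)`. All pieces can never be dropped, since
`I` is proper.
-/

open Set

section

variable {G : Type*} {I : Set (Set G)}

theorem IsSetIdeal.union_mem (hI : IsSetIdeal I) {s t : Set G} (hs : s ∈ I) (ht : t ∈ I) :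
    s ∪ t ∈ I :=
  hI.2 s hs t ht

theorem IsSetIdeal.mem_of_subset (hI : IsSetIdeal I) {s t : Set G} (hst : s ⊆ t) (ht : t ∈ I) :
    s ∈ I :=
  hI.1 s t hst ht

theorem IsSetIdeal.biUnion_mem (hI : IsSetIdeal I) (hE : ∅ ∈ I) {ι : Type*} (S : Finset ι)
    {f : ι → Set G} (hf : ∀ i ∈ S, f i ∈ I) : ⋃ i ∈ S, f i ∈ I := by
  classical
  induction S using Finset.induction_on with
  | empty => simpa using hE
  | insert a S _ ih =>
    rw [Finset.set_biUnion_insert]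
    exact hI.union_mem (hf a (Finset.mem_insert_self a S))
      (ih fun i hi => hf i (Finset.mem_insert_of_mem hi))

end

theorem add_mul_self_le_two_pow_two_pow {c t : ℕ} (hc : c ≤ 2 ^ (2 ^ t - 1)) :
    c + c * c ≤ 2 ^ (2 ^ (t + 1) - 1) := by
  have hexp : 2 ^ (t + 1) - 1 = (2 ^ t - 1) + (2 ^ t - 1) + 1 := by
    have := Nat.one_le_two_pow (n := t)
    rw [pow_succ]
    omega
  calc c + c * c ≤ c * c + c * c := Nat.add_le_add_right (Nat.le_mul_self c) _
    _ ≤ 2 ^ (2 ^ t - 1) * 2 ^ (2 ^ t - 1) + 2 ^ (2 ^ t - 1) * 2 ^ (2 ^ t - 1) := by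
      gcongr
    _ = 2 ^ (2 ^ (t + 1) - 1) := by rw [hexp, pow_succ, pow_add]; ring

theorem card_union_mul_singleton_mul_le {M : Type*} [Mul M] [IsRightCancelMul M] [DecidableEq M]
    {U V : Finset M} {c : ℕ} (hU : U.card ≤ c) (hV : V.card ≤ c) (g : M) : (U ∪ V * {g} * U).card ≤ c + c * c :=
  calc (U ∪ V * {g} * U).card ≤ U.card + (V * {g}).card * U.card :=
        (Finset.card_union_le _ _).trans (Nat.add_le_add_left Finset.card_mul_le _)
    _ ≤ c + c * c := by rw [Finset.card_mul_singleton]; gcongr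

section

variable {G : Type*} [Group G] {I : Set (Set G)} {ι : Type*}

theorem IsTransInv.smul_mem_iff (hT : IsTransInv I) {g : G} {s : Set G} :
    g • s ∈ I ↔ s ∈ I :=
  ⟨fun h => by simpa using hT _ h g⁻¹, fun h => hT s h g⟩

theorem inv_mem_combDerivI (hT : IsTransInv I) {A : Set G} {g : G} :
    g⁻¹ ∈ combDerivI I A ↔ g ∈ combDerivI I A := by
  have : g • (g⁻¹ • A ∩ A) = A ∩ g • A := by rw [smul_set_inter, smul_inv_smul]
  simp only [combDerivI, mem_ofPred_eq]
  rw [← hT.smul_mem_iff (g := g), this, inter_comm]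

theorem combDerivI_eq_univ (hI : IsSetIdeal I) (hE : ∅ ∉ I) (A : Set G) :
    combDerivI I A = univ :=
  eq_univ_of_forall fun _ h => hE (hI.mem_of_subset (empty_subset _) h)

theorem smul_coe_mul_eq_biUnion (g : G) (U : Finset G) (A : Set G) :
    g • ((U : Set G) * A) = ⋃ v ∈ U, (g * v) • A := by
  rw [← smul_eq_mul, ← iUnion_smul_set, smul_set_iUnion₂]
  simp only [Finset.mem_coe, smul_smul]

theorem mul_combDerivI_eq_univ_or (hI : IsSetIdeal I) (hT : IsTransInv I) (hE : ∅ ∈ I)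
    (U : Finset G) (A : Set G) :
    (U : Set G) * combDerivI I A = univ ∨ ∃ g : G, A ∩ g • ((U : Set G) * A) ∈ I := by
  refine or_iff_not_imp_left.2 fun hU => ?_
  obtain ⟨y, hy⟩ := (ne_univ_iff_exists_notMem _).1 hU
  refine ⟨y⁻¹, ?_⟩
  rw [smul_coe_mul_eq_biUnion, inter_iUnion₂]
  refine hI.biUnion_mem hE U fun v hv => not_not.1 fun hvA => hy ?_
  have hΔ : v⁻¹ * y ∈ combDerivI I A := by
    rw [← inv_mem_combDerivI hT, mul_inv_rev, inv_inv]
    simpa [combDerivI, inter_comm] using hvA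
  exact ⟨v, hv, v⁻¹ * y, hΔ, mul_inv_cancel_left v y⟩

def translateUnion (S : Finset ι) (U : ι → Finset G) (A : ι → Set G) : Set G :=
  ⋃ i ∈ S, (U i : Set G) * A i

theorem translateUnion_insert_erase [DecidableEq ι] {S : Finset ι} {j : ι} (hj : j ∈ S)
    (U : ι → Finset G) (A : ι → Set G) :
    translateUnion S U A = (U j : Set G) * A j ∪ translateUnion (S.erase j) U A := by
  conv_lhs => rw [← Finset.insert_erase hj]
  exact Finset.set_biUnion_insert _ _ _

theorem translateUnion_mono {S : Finset ι} {U V : ι → Finset G} (hUV : ∀ i ∈ S, U i ⊆ V i)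
    (A : ι → Set G) : translateUnion S U A ⊆ translateUnion S V A :=
  biUnion_mono subset_rfl fun i hi => mul_subset_mul_right (Finset.coe_subset.2 (hUV i hi))

theorem smul_translateUnion_subset [DecidableEq G] {S : Finset ι} {U V : ι → Finset G}
    {h : G} (hUV : ∀ i ∈ S, {h} * U i ⊆ V i) (A : ι → Set G) :
    h • translateUnion S U A ⊆ translateUnion S V A := by
  rintro _ ⟨y, hy, rfl⟩
  obtain ⟨i, hi, w, hw, a, ha, rfl⟩ := mem_iUnion₂.1 hy
  refine mem_iUnion₂.2 ⟨i, hi, h * w, ?_, a, ha, mul_assoc h w a⟩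
  exact hUV i hi (Finset.mul_mem_mul (Finset.mem_singleton_self h) hw)

theorem compl_translateUnion_erase_mem [DecidableEq ι] [DecidableEq G] (hI : IsSetIdeal I)
    (hT : IsTransInv I) {S : Finset ι} {j : ι} (hj : j ∈ S) {U : ι → Finset G}
    {A : ι → Set G} {g : G} (hg : A j ∩ g • ((U j : Set G) * A j) ∈ I)
    (hR : (translateUnion S U A)ᶜ ∈ I) :
    (translateUnion (S.erase j) (fun i => U i ∪ U j * {g} * U i) A)ᶜ ∈ I := by
  set R := (translateUnion S U A)ᶜ
  set U' : ι → Finset G := fun i => U i ∪ U j * {g} * U i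
  have hE : ∅ ∈ I := hI.mem_of_subset (empty_subset _) hR
  have hshift : ∀ u ∈ U j, (u * g) • translateUnion (S.erase j) U A ⊆
      translateUnion (S.erase j) U' A := fun u hu =>
    smul_translateUnion_subset (fun i _ => Finset.subset_union_right.trans' <|
      Finset.mul_subset_mul_right <| Finset.singleton_subset_iff.2 <|
        Finset.mul_mem_mul hu (Finset.mem_singleton_self g)) A
  have hcover : (translateUnion (S.erase j) U' A)ᶜ ⊆
      R ∪ ⋃ u ∈ U j, (u • (A j ∩ g • ((U j : Set G) * A j)) ∪ (u * g) • R) := by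
    intro x hx
    by_cases hxR : x ∈ R
    · exact Or.inl hxR
    refine Or.inr ?_
    have hxU : x ∉ translateUnion (S.erase j) U A := fun h =>
      hx (translateUnion_mono (fun i _ => Finset.subset_union_left) A h)
    rw [mem_compl_iff, not_not, translateUnion_insert_erase hj] at hxR
    obtain ⟨u, hu, a, ha, rfl⟩ := hxR.resolve_right hxU
    refine mem_iUnion₂.2 ⟨u, hu, ?_⟩
    by_cases hyR : (u * g)⁻¹ • (u * a) ∈ R
    · exact Or.inr (mem_smul_set_iff_inv_smul_mem.2 hyR)
    rw [mem_compl_iff, not_not, translateUnion_insert_erase hj] at hyR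
    have hy : (u * g)⁻¹ • (u * a) ∈ (U j : Set G) * A j := hyR.resolve_right fun h =>
      hx (hshift u hu (mem_smul_set_iff_inv_smul_mem.2 h))
    refine Or.inl (mem_smul_set_iff_inv_smul_mem.2 ⟨by simpa using ha, ?_⟩)
    rw [mem_smul_set_iff_inv_smul_mem, smul_smul, ← mul_inv_rev]
    exact hy
  exact hI.mem_of_subset hcover <| hI.union_mem hR <| hI.biUnion_mem hE _ fun u _ =>
    hI.union_mem (hT _ hg u) (hT _ hR _)

theorem exists_mul_combDerivI_eq_univ_of_compl_translateUnion_mem [DecidableEq ι] [DecidableEq G]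
    (hI : IsSetIdeal I) (hT : IsTransInv I) (hP : univ ∉ I) (A : ι → Set G) (S : Finset ι)
    (t : ℕ) (U : ι → Finset G) (hU : ∀ i ∈ S, (U i).card ≤ 2 ^ (2 ^ t - 1))
    (hR : (translateUnion S U A)ᶜ ∈ I) :
    ∃ (i : ι) (F : Finset G), F.card ≤ 2 ^ (2 ^ (t + S.card - 1) - 1) ∧
      (F : Set G) * combDerivI I (A i) = univ := by
  induction S using Finset.strongInduction generalizing t U with
  | H S ih =>
  have hE : ∅ ∈ I := hI.mem_of_subset (empty_subset _) hR
  obtain rfl | ⟨j, hj⟩ := S.eq_empty_or_nonempty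
  · exact absurd (by simpa [translateUnion] using hR) hP
  have hcard := Finset.card_erase_of_mem hj
  have hpos := Finset.card_pos.2 ⟨j, hj⟩
  obtain hF | ⟨g, hg⟩ := mul_combDerivI_eq_univ_or hI hT hE (U j) (A j)
  · refine ⟨j, U j, (hU j hj).trans ?_, hF⟩
    exact Nat.pow_le_pow_right two_pos <| Nat.sub_le_sub_right
      (Nat.pow_le_pow_right two_pos (by omega)) 1
  obtain ⟨i, F, hF, hΔ⟩ := ih (S.erase j) (Finset.erase_ssubset hj) (t + 1) _
    (fun i hi => card_union_mul_singleton_mul_le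
      (hU i (Finset.mem_of_mem_erase hi)) (hU j hj) g |>.trans
      (add_mul_self_le_two_pow_two_pow le_rfl))
    (compl_translateUnion_erase_mem hI hT hj hg hR)
  exact ⟨i, F, hF.trans_eq (by rw [hcard]; congr 3; omega), hΔ⟩

end

theorem decomposition_deltaI_general {G : Type*} [Group G]
    (I : Set (Set G)) (hIdeal : IsSetIdeal I) (hTrans : IsTransInv I)
    (hProper : Set.univ ∉ I) (n : ℕ) (A : Fin n → Set G)
    (hcover : (⋃ i, A i) = Set.univ) :
    ∃ (i : Fin n) (F : Finset G), F.card ≤ 2 ^ (2 ^ (n - 1) - 1) ∧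
      (F : Set G) * combDerivI I (A i) = Set.univ := by
  classical
  by_cases hE : ∅ ∈ I
  · have hR : (translateUnion Finset.univ (fun _ => {1}) A)ᶜ = ∅ := by
      simp [translateUnion, hcover]
    simpa using exists_mul_combDerivI_eq_univ_of_compl_translateUnion_mem hIdeal hTrans
      hProper A Finset.univ 0 (fun _ => {1}) (by simp) (hR ▸ hE)
  obtain ⟨i, -⟩ := mem_iUnion.1 (hcover ▸ mem_univ (1 : G))
  exact ⟨i, {1}, Nat.one_le_two_pow, by simp [combDerivI_eq_univ hIdeal hE]⟩

/-- Given a decomposition `G = A₁ ∪ … ∪ Aₙ`, there exist `i` and `F` with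
`|F| ≤ 2^(2^(n-1) - 1)` and `F·Δ_I(Aᵢ) = G`. -/
theorem decomposition_deltaI {G : Type*} [Group G] [Infinite G]
    (I : Set (Set G)) (hIdeal : IsSetIdeal I) (hTrans : IsTransInv I)
    (hProper : Set.univ ∉ I) (n : ℕ) (A : Fin n → Set G)
    (hcover : (⋃ i, A i) = Set.univ) :
    ∃ (i : Fin n) (F : Finset G), F.card ≤ 2 ^ (2 ^ (n - 1) - 1) ∧
      (F : Set G) * combDerivI I (A i) = Set.univ :=
  decomposition_deltaI_general I hIdeal hTrans hProper n A hcover
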